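/- The relations →_E and →_R commute: if M →_E* N and M →_R* M', then there exists a term P such that N →_R* P and M' →_E* P. -/
import Mathlib

/-- Untyped lambda terms with pairing and projections, de Bruijn representation
(so terms are automatically identified up to alpha-equivalence). -/
inductive Tm : Type
  | var : Nat → Tm
  | app : Tm → Tm → Tm
  | lam : Tm → Tm
  | pair : Tm → Tm → Tm
  | p1 : Tm → Tm
  | p2 : Tm → Tm

/-- Shift free de Bruijn indices ≥ d up by one. -/
def Tm.lift (d : Nat) : Tm → Tm
  | .var n => if n < d then .var n else .var (n + 1)
  | .app a b => .app (a.lift d) (b.lift d)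
  | .lam a => .lam (a.lift (d + 1))
  | .pair a b => .pair (a.lift d) (b.lift d)
  | .p1 a => .p1 (a.lift d)
  | .p2 a => .p2 (a.lift d)

/-- Capture-avoiding substitution of s for variable k. -/
def Tm.subst : Tm → Nat → Tm → Tm
  | .var n, k, s => if n = k then s else if n < k then .var n else .var (n - 1)
  | .app a b, k, s => .app (a.subst k s) (b.subst k s)
  | .lam a, k, s => .lam (a.subst (k + 1) (s.lift 0))
  | .pair a b, k, s => .pair (a.subst k s) (b.subst k s)
  | .p1 a, k, s => .p1 (a.subst k s)
  | .p2 a, k, s => .p2 (a.subst k s)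

/-- One-step R-reduction: compatible closure of (β), (π₁), (π₂), (δπ), (π₁λ), (π₂λ). -/
inductive StepR : Tm → Tm → Prop
  | beta {M N} : StepR (.app (.lam M) N) (M.subst 0 N)
  | pi1 {M N} : StepR (.p1 (.pair M N)) M
  | pi2 {M N} : StepR (.p2 (.pair M N)) N
  | dpi {M N P} : StepR (.app (.pair M N) P) (.pair (.app M P) (.app N P))
  | pi1lam {M} : StepR (.p1 (.lam M)) (.lam (.p1 M))
  | pi2lam {M} : StepR (.p2 (.lam M)) (.lam (.p2 M))
  | lam {M M'} : StepR M M' → StepR (.lam M) (.lam M')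
  | appL {M M' N} : StepR M M' → StepR (.app M N) (.app M' N)
  | appR {M N N'} : StepR N N' → StepR (.app M N) (.app M N')
  | pairL {M M' N} : StepR M M' → StepR (.pair M N) (.pair M' N)
  | pairR {M N N'} : StepR N N' → StepR (.pair M N) (.pair M N')
  | p1 {M M'} : StepR M M' → StepR (.p1 M) (.p1 M')
  | p2 {M M'} : StepR M M' → StepR (.p2 M) (.p2 M')

/-- One-step η/SP-expansion: compatible closure of (η̄) and (S̄P). -/
inductive StepE : Tm → Tm → Prop
  | eta {M} : StepE M (.lam (.app (M.lift 0) (.var 0)))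
  | sp {M} : StepE M (.pair (.p1 M) (.p2 M))
  | lam {M M'} : StepE M M' → StepE (.lam M) (.lam M')
  | appL {M M' N} : StepE M M' → StepE (.app M N) (.app M' N)
  | appR {M N N'} : StepE N N' → StepE (.app M N) (.app M N')
  | pairL {M M' N} : StepE M M' → StepE (.pair M N) (.pair M' N)
  | pairR {M N N'} : StepE N N' → StepE (.pair M N) (.pair M N')
  | p1 {M M'} : StepE M M' → StepE (.p1 M) (.p1 M')
  | p2 {M M'} : StepE M M' → StepE (.p2 M) (.p2 M')

abbrev RS := Relation.ReflTransGen StepR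
abbrev ES := Relation.ReflTransGen StepE

/- ### de Bruijn identities -/

theorem lift_lift (t : Tm) : ∀ {i j}, i ≤ j →
    (t.lift i).lift (j+1) = (t.lift j).lift i := by
  induction t with
  | var n =>
    intro i j hij
    simp only [Tm.lift]
    split_ifs <;> simp [Tm.lift] <;> split_ifs <;> first | rfl | omega
  | app a b iha ihb => intro i j hij; simp [Tm.lift, iha hij, ihb hij]
  | lam a iha => intro i j hij; simp [Tm.lift, iha (Nat.succ_le_succ hij)]
  | pair a b iha ihb => intro i j hij; simp [Tm.lift, iha hij, ihb hij]
  | p1 a iha => intro i j hij; simp [Tm.lift, iha hij]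
  | p2 a iha => intro i j hij; simp [Tm.lift, iha hij]

theorem subst_lift_cancel (t : Tm) : ∀ {k s}, (t.lift k).subst k s = t := by
  induction t with
  | var n =>
    intro k s
    by_cases h : n < k
    · have h1 : n ≠ k := by omega
      simp [Tm.lift, Tm.subst, h, h1]
    · have h1 : ¬ (n + 1 = k) := by omega
      have h2 : ¬ (n + 1 < k) := by omega
      simp [Tm.lift, Tm.subst, h, h1, h2]
  | app a b iha ihb => intro k s; simp [Tm.lift, Tm.subst, iha, ihb]
  | lam a iha => intro k s; simp only [Tm.lift, Tm.subst, iha]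
  | pair a b iha ihb => intro k s; simp [Tm.lift, Tm.subst, iha, ihb]
  | p1 a iha => intro k s; simp [Tm.lift, Tm.subst, iha]
  | p2 a iha => intro k s; simp [Tm.lift, Tm.subst, iha]

theorem lift_subst_le (t : Tm) : ∀ {k s i}, i ≤ k →
    (t.subst k s).lift i = (t.lift i).subst (k+1) (s.lift i) := by
  induction t with
  | var n =>
    intro k s i hik
    simp only [Tm.subst, Tm.lift]
    split_ifs <;> simp [Tm.subst, Tm.lift] <;> split_ifs <;>
      first | rfl | omega | (congr 1; omega)
  | app a b iha ihb => intro k s i h; simp [Tm.subst, Tm.lift, iha h, ihb h]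
  | lam a iha =>
    intro k s i h
    simp only [Tm.subst, Tm.lift, iha (Nat.succ_le_succ h)]
    rw [lift_lift s (Nat.zero_le i)]
  | pair a b iha ihb => intro k s i h; simp [Tm.subst, Tm.lift, iha h, ihb h]
  | p1 a iha => intro k s i h; simp [Tm.subst, Tm.lift, iha h]
  | p2 a iha => intro k s i h; simp [Tm.subst, Tm.lift, iha h]

theorem lift_subst_ge (t : Tm) : ∀ {k s i}, k ≤ i →
    (t.subst k s).lift i = (t.lift (i+1)).subst k (s.lift i) := by
  induction t with
  | var n =>
    intro k s i hik
    simp only [Tm.subst, Tm.lift]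
    split_ifs <;> simp [Tm.subst, Tm.lift] <;> split_ifs <;>
      first | rfl | omega | (congr 1; omega)
  | app a b iha ihb => intro k s i h; simp [Tm.subst, Tm.lift, iha h, ihb h]
  | lam a iha =>
    intro k s i h
    simp only [Tm.subst, Tm.lift, iha (Nat.succ_le_succ h)]
    rw [lift_lift s (Nat.zero_le i)]
  | pair a b iha ihb => intro k s i h; simp [Tm.subst, Tm.lift, iha h, ihb h]
  | p1 a iha => intro k s i h; simp [Tm.subst, Tm.lift, iha h]
  | p2 a iha => intro k s i h; simp [Tm.subst, Tm.lift, iha h]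

theorem var_lift_zero (d : Nat) : (Tm.var d).lift 0 = Tm.var (d+1) := by
  simp [Tm.lift]

/-- (t.lift (d+1)).subst d (var d) = t -/
theorem lift_succ_subst_var (t : Tm) : ∀ {d}, (t.lift (d+1)).subst d (.var d) = t := by
  induction t with
  | var n =>
    intro d
    by_cases h : n < d + 1
    · simp only [Tm.lift, if_pos h, Tm.subst]
      by_cases h2 : n = d
      · rw [if_pos h2, h2]
      · rw [if_neg h2, if_pos (by omega)]
    · simp only [Tm.lift, if_neg h, Tm.subst]
      rw [if_neg (by omega), if_neg (by omega)]
      simp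
  | app a b iha ihb => intro d; simp [Tm.lift, Tm.subst, iha, ihb]
  | lam a iha =>
    intro d
    simp [Tm.lift, Tm.subst, iha]
  | pair a b iha ihb => intro d; simp [Tm.lift, Tm.subst, iha, ihb]
  | p1 a iha => intro d; simp [Tm.lift, Tm.subst, iha]
  | p2 a iha => intro d; simp [Tm.lift, Tm.subst, iha]
/- ### congruence lemmas for reflexive-transitive closures -/

theorem RS.appL {f g x : Tm} (h : RS f g) : RS (.app f x) (.app g x) := by
  induction h with
  | refl => exact .refl
  | tail _ h2 ih => exact ih.tail (.appL h2)

theorem RS.appR {f x y : Tm} (h : RS x y) : RS (.app f x) (.app f y) := by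
  induction h with
  | refl => exact .refl
  | tail _ h2 ih => exact ih.tail (.appR h2)

theorem RS.lam {a b : Tm} (h : RS a b) : RS (.lam a) (.lam b) := by
  induction h with
  | refl => exact .refl
  | tail _ h2 ih => exact ih.tail (.lam h2)

theorem RS.pairL {a b x : Tm} (h : RS a b) : RS (.pair a x) (.pair b x) := by
  induction h with
  | refl => exact .refl
  | tail _ h2 ih => exact ih.tail (.pairL h2)

theorem RS.pairR {x a b : Tm} (h : RS a b) : RS (.pair x a) (.pair x b) := by
  induction h with
  | refl => exact .refl
  | tail _ h2 ih => exact ih.tail (.pairR h2)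

theorem RS.p1 {a b : Tm} (h : RS a b) : RS (.p1 a) (.p1 b) := by
  induction h with
  | refl => exact .refl
  | tail _ h2 ih => exact ih.tail (.p1 h2)

theorem RS.p2 {a b : Tm} (h : RS a b) : RS (.p2 a) (.p2 b) := by
  induction h with
  | refl => exact .refl
  | tail _ h2 ih => exact ih.tail (.p2 h2)

theorem ES.appL {f g x : Tm} (h : ES f g) : ES (.app f x) (.app g x) := by
  induction h with
  | refl => exact .refl
  | tail _ h2 ih => exact ih.tail (.appL h2)

theorem ES.appR {f x y : Tm} (h : ES x y) : ES (.app f x) (.app f y) := by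
  induction h with
  | refl => exact .refl
  | tail _ h2 ih => exact ih.tail (.appR h2)

theorem ES.lam {a b : Tm} (h : ES a b) : ES (.lam a) (.lam b) := by
  induction h with
  | refl => exact .refl
  | tail _ h2 ih => exact ih.tail (.lam h2)

theorem ES.pairL {a b x : Tm} (h : ES a b) : ES (.pair a x) (.pair b x) := by
  induction h with
  | refl => exact .refl
  | tail _ h2 ih => exact ih.tail (.pairL h2)

theorem ES.pairR {x a b : Tm} (h : ES a b) : ES (.pair x a) (.pair x b) := by
  induction h with
  | refl => exact .refl
  | tail _ h2 ih => exact ih.tail (.pairR h2)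

theorem ES.p1 {a b : Tm} (h : ES a b) : ES (.p1 a) (.p1 b) := by
  induction h with
  | refl => exact .refl
  | tail _ h2 ih => exact ih.tail (.p1 h2)

theorem ES.p2 {a b : Tm} (h : ES a b) : ES (.p2 a) (.p2 b) := by
  induction h with
  | refl => exact .refl
  | tail _ h2 ih => exact ih.tail (.p2 h2)

/- ### lifting of steps -/

theorem StepR.lift {a b : Tm} (h : StepR a b) : ∀ d, StepR (a.lift d) (b.lift d) := by
  induction h with
  | @beta M N =>
    intro d
    have : (M.subst 0 N).lift d = (M.lift (d+1)).subst 0 (N.lift d) :=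
      lift_subst_ge M (Nat.zero_le d)
    simpa [Tm.lift, this] using StepR.beta (M := M.lift (d+1)) (N := N.lift d)
  | pi1 => intro d; simpa [Tm.lift] using StepR.pi1
  | pi2 => intro d; simpa [Tm.lift] using StepR.pi2
  | dpi => intro d; simpa [Tm.lift] using StepR.dpi
  | pi1lam => intro d; simpa [Tm.lift] using StepR.pi1lam
  | pi2lam => intro d; simpa [Tm.lift] using StepR.pi2lam
  | lam _ ih => intro d; simpa [Tm.lift] using StepR.lam (ih (d+1))
  | appL _ ih => intro d; simpa [Tm.lift] using StepR.appL (ih d)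
  | appR _ ih => intro d; simpa [Tm.lift] using StepR.appR (ih d)
  | pairL _ ih => intro d; simpa [Tm.lift] using StepR.pairL (ih d)
  | pairR _ ih => intro d; simpa [Tm.lift] using StepR.pairR (ih d)
  | p1 _ ih => intro d; simpa [Tm.lift] using StepR.p1 (ih d)
  | p2 _ ih => intro d; simpa [Tm.lift] using StepR.p2 (ih d)

theorem RS.lift {a b : Tm} (h : RS a b) (d : Nat) : RS (a.lift d) (b.lift d) := by
  induction h with
  | refl => exact .refl
  | tail _ h2 ih => exact ih.tail (h2.lift d)

theorem StepE.lift {a b : Tm} (h : StepE a b) : ∀ d, StepE (a.lift d) (b.lift d) := by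
  induction h with
  | @eta M =>
    intro d
    have h1 : (M.lift 0).lift (d+1) = (M.lift d).lift 0 := lift_lift M (Nat.zero_le d)
    have h2 : (Tm.var 0).lift (d+1) = Tm.var 0 := by simp [Tm.lift]
    simpa [Tm.lift, h1, h2] using StepE.eta (M := M.lift d)
  | sp => intro d; simpa [Tm.lift] using StepE.sp
  | lam _ ih => intro d; simpa [Tm.lift] using StepE.lam (ih (d+1))
  | appL _ ih => intro d; simpa [Tm.lift] using StepE.appL (ih d)
  | appR _ ih => intro d; simpa [Tm.lift] using StepE.appR (ih d)
  | pairL _ ih => intro d; simpa [Tm.lift] using StepE.pairL (ih d)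
  | pairR _ ih => intro d; simpa [Tm.lift] using StepE.pairR (ih d)
  | p1 _ ih => intro d; simpa [Tm.lift] using StepE.p1 (ih d)
  | p2 _ ih => intro d; simpa [Tm.lift] using StepE.p2 (ih d)

theorem ES.lift {a b : Tm} (h : ES a b) (d : Nat) : ES (a.lift d) (b.lift d) := by
  induction h with
  | refl => exact .refl
  | tail _ h2 ih => exact ih.tail (h2.lift d)

/- ### projections indexed by booleans, and words of projections -/

def prj (j : Bool) (t : Tm) : Tm := if j then .p2 t else .p1 t

def sel (j : Bool) (c d : Tm) : Tm := if j then d else c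

@[simp] theorem prj_false (t : Tm) : prj false t = .p1 t := rfl
@[simp] theorem prj_true (t : Tm) : prj true t = .p2 t := rfl
@[simp] theorem sel_false (c d : Tm) : sel false c d = c := rfl
@[simp] theorem sel_true (c d : Tm) : sel true c d = d := rfl

theorem StepR.prj {a b : Tm} (j : Bool) (h : StepR a b) : StepR (prj j a) (prj j b) := by
  cases j
  · exact .p1 h
  · exact .p2 h

theorem RS.prj {a b : Tm} (j : Bool) (h : RS a b) : RS (prj j a) (prj j b) := by
  cases j
  · exact .p1 h
  · exact .p2 h

theorem StepR.prj_pair (j : Bool) (c d : Tm) : StepR (_root_.prj j (Tm.pair c d)) (_root_.sel j c d) := by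
  cases j
  · exact .pi1
  · exact .pi2

theorem StepR.prj_lam (j : Bool) (a : Tm) : StepR (_root_.prj j (Tm.lam a)) (Tm.lam (_root_.prj j a)) := by
  cases j
  · exact .pi1lam
  · exact .pi2lam

theorem prj_lift (j : Bool) (t : Tm) (d : Nat) : (prj j t).lift d = prj j (t.lift d) := by
  cases j <;> simp [Tm.lift, prj]

theorem prj_subst (j : Bool) (t : Tm) (k : Nat) (s : Tm) :
    (prj j t).subst k s = prj j (t.subst k s) := by
  cases j <;> simp [Tm.subst, prj]

theorem sel_lift (j : Bool) (c d : Tm) (i : Nat) :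
    (sel j c d).lift i = sel j (c.lift i) (d.lift i) := by
  cases j <;> simp [sel]

/-- Apply a word of projections, innermost-first (head is applied first, i.e. innermost). -/
def Win : List Bool → Tm → Tm
  | [], t => t
  | b :: v, t => Win v (prj b t)

/-- Apply a word of projections, outermost-first (head is applied last, i.e. outermost). -/
def Wout : List Bool → Tm → Tm
  | [], t => t
  | b :: w, t => prj b (Wout w t)

@[simp] theorem Win_nil (t : Tm) : Win [] t = t := rfl
@[simp] theorem Win_cons (b : Bool) (v : List Bool) (t : Tm) :
    Win (b :: v) t = Win v (prj b t) := rfl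
@[simp] theorem Wout_nil (t : Tm) : Wout [] t = t := rfl
@[simp] theorem Wout_cons (b : Bool) (w : List Bool) (t : Tm) :
    Wout (b :: w) t = prj b (Wout w t) := rfl

theorem RS.win {a b : Tm} (V : List Bool) (h : RS a b) : RS (Win V a) (Win V b) := by
  induction V generalizing a b with
  | nil => exact h
  | cons c v ih => exact ih (h.prj c)

theorem Win_subst (V : List Bool) (t : Tm) (k : Nat) (s : Tm) :
    (Win V t).subst k s = Win V (t.subst k s) := by
  induction V generalizing t with
  | nil => rfl
  | cons c v ih => simp [Win, ih, prj_subst]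

theorem Win_lift (V : List Bool) (t : Tm) (d : Nat) :
    (Win V t).lift d = Win V (t.lift d) := by
  induction V generalizing t with
  | nil => rfl
  | cons c v ih => simp [Win, ih, prj_lift]

/-- pull a lambda out through a word of projections -/
theorem lam_pull (V : List Bool) (X : Tm) : RS (Win V (.lam X)) (.lam (Win V X)) := by
  induction V generalizing X with
  | nil => exact .refl
  | cons c v ih =>
    exact (RS.win v (Relation.ReflTransGen.single (StepR.prj_lam c X))).trans (ih (prj c X))
/- ### Sized parallel expansion relation.
`PrN n M N` : N is obtained from M by (nested) parallel η̄/SP-expansions,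
with derivation depth ≤ n (roughly).  The `eta` rule keeps the source `t`:
this makes substitution lemmas clean.  The `sp` rule has projected
premises, which makes it closed under arbitrary sources. -/
inductive PrN : Nat → Tm → Tm → Prop
  | var (n i) : PrN n (.var i) (.var i)
  | app {n f f' x x'} : PrN n f f' → PrN n x x' → PrN (n+1) (.app f x) (.app f' x')
  | lam {n t t'} : PrN n t t' → PrN (n+1) (.lam t) (.lam t')
  | pair {n x x' y y'} : PrN n x x' → PrN n y y' → PrN (n+1) (.pair x y) (.pair x' y')
  | p1 {n t t'} : PrN n t t' → PrN (n+1) (.p1 t) (.p1 t')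
  | p2 {n t t'} : PrN n t t' → PrN (n+1) (.p2 t) (.p2 t')
  | eta {n t t'} : PrN n t t' → PrN (n+1) t (.lam (.app (t'.lift 0) (.var 0)))
  | sp {n t p q} : PrN n (.p1 t) p → PrN n (.p2 t) q → PrN (n+1) t (.pair p q)

theorem PrN.succ {n a b} (h : PrN n a b) : PrN (n+1) a b := by
  induction h with
  | var n i => exact .var _ _
  | app _ _ ih1 ih2 => exact .app ih1 ih2
  | lam _ ih => exact .lam ih
  | pair _ _ ih1 ih2 => exact .pair ih1 ih2
  | p1 _ ih => exact .p1 ih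
  | p2 _ ih => exact .p2 ih
  | eta _ ih => exact .eta ih
  | sp _ _ ih1 ih2 => exact .sp ih1 ih2

theorem PrN.mono {n m a b} (h : PrN n a b) (hle : n ≤ m) : PrN m a b := by
  induction hle with
  | refl => exact h
  | step _ ih => exact ih.succ

theorem PrN.prj {n a b} (j : Bool) (h : PrN n a b) : PrN (n+1) (prj j a) (prj j b) := by
  cases j
  · exact .p1 h
  · exact .p2 h

/-- term size, used to produce reflexivity derivations -/
def Tm.sz : Tm → Nat
  | .var _ => 0
  | .app a b => max a.sz b.sz + 1
  | .lam a => a.sz + 1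
  | .pair a b => max a.sz b.sz + 1
  | .p1 a => a.sz + 1
  | .p2 a => a.sz + 1

theorem PrN.refl (t : Tm) : PrN t.sz t t := by
  induction t with
  | var i => exact .var _ _
  | app a b iha ihb =>
    exact .app (iha.mono (Nat.le_max_left _ _)) (ihb.mono (Nat.le_max_right _ _))
  | lam a iha => exact .lam iha
  | pair a b iha ihb =>
    exact .pair (iha.mono (Nat.le_max_left _ _)) (ihb.mono (Nat.le_max_right _ _))
  | p1 a iha => exact .p1 iha
  | p2 a iha => exact .p2 iha

/-- parallel expansion without a size -/
def Pe (a b : Tm) : Prop := ∃ n, PrN n a b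

theorem Pe.ofN {n a b} (h : PrN n a b) : Pe a b := ⟨n, h⟩

theorem Pe.refl (t : Tm) : Pe t t := ⟨_, PrN.refl t⟩

theorem Pe.app {f f' x x'} : Pe f f' → Pe x x' → Pe (.app f x) (.app f' x')
  | ⟨n, h1⟩, ⟨m, h2⟩ =>
    ⟨max n m + 1, .app (h1.mono (Nat.le_max_left _ _)) (h2.mono (Nat.le_max_right _ _))⟩

theorem Pe.lam {t t'} : Pe t t' → Pe (.lam t) (.lam t')
  | ⟨n, h⟩ => ⟨n+1, .lam h⟩

theorem Pe.pair {x x' y y'} : Pe x x' → Pe y y' → Pe (.pair x y) (.pair x' y')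
  | ⟨n, h1⟩, ⟨m, h2⟩ =>
    ⟨max n m + 1, .pair (h1.mono (Nat.le_max_left _ _)) (h2.mono (Nat.le_max_right _ _))⟩

theorem Pe.p1 {t t'} : Pe t t' → Pe (.p1 t) (.p1 t')
  | ⟨n, h⟩ => ⟨n+1, .p1 h⟩

theorem Pe.p2 {t t'} : Pe t t' → Pe (.p2 t) (.p2 t')
  | ⟨n, h⟩ => ⟨n+1, .p2 h⟩

theorem Pe.prj {t t'} (j : Bool) : Pe t t' → Pe (prj j t) (prj j t')
  | ⟨n, h⟩ => ⟨n+1, h.prj j⟩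

theorem Pe.eta {t t'} : Pe t t' → Pe t (.lam (.app (t'.lift 0) (.var 0)))
  | ⟨n, h⟩ => ⟨n+1, .eta h⟩

theorem Pe.sp {t p q} : Pe (.p1 t) p → Pe (.p2 t) q → Pe t (.pair p q)
  | ⟨n, h1⟩, ⟨m, h2⟩ =>
    ⟨max n m + 1, .sp (h1.mono (Nat.le_max_left _ _)) (h2.mono (Nat.le_max_right _ _))⟩

theorem Pe.win (V : List Bool) {a b : Tm} (h : Pe a b) : Pe (Win V a) (Win V b) := by
  induction V generalizing a b with
  | nil => exact h
  | cons c v ih => exact ih (h.prj c)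

/- ### lifting and unlifting parallel expansions -/

theorem PrN.lift {n a b} (h : PrN n a b) : ∀ d, PrN n (a.lift d) (b.lift d) := by
  induction h with
  | var n i => intro d; simp only [Tm.lift]; split_ifs <;> exact .var _ _
  | app _ _ ih1 ih2 => intro d; exact .app (ih1 d) (ih2 d)
  | lam _ ih => intro d; exact .lam (ih (d+1))
  | pair _ _ ih1 ih2 => intro d; exact .pair (ih1 d) (ih2 d)
  | p1 _ ih => intro d; exact .p1 (ih d)
  | p2 _ ih => intro d; exact .p2 (ih d)
  | @eta n t t' _ ih =>
    intro d
    have h1 : (t'.lift 0).lift (d+1) = (t'.lift d).lift 0 := lift_lift t' (Nat.zero_le d)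
    have h2 : (Tm.var 0).lift (d+1) = Tm.var 0 := by simp [Tm.lift]
    have := PrN.eta (ih d)
    simpa [Tm.lift, h1, h2] using this
  | @sp n t p q _ _ ih1 ih2 =>
    intro d
    exact .sp (by simpa [Tm.lift] using ih1 d) (by simpa [Tm.lift] using ih2 d)

theorem Pe.lift {a b} (h : Pe a b) (d : Nat) : Pe (a.lift d) (b.lift d) := by
  obtain ⟨n, h⟩ := h; exact ⟨n, h.lift d⟩

/-- helpers: shape inversion for lifts -/
theorem lift_eq_var {t : Tm} {k i} (h : t.lift k = .var i) : ∃ i', t = .var i' := by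
  cases t <;> first | exact ⟨_, rfl⟩ | simp [Tm.lift] at h

theorem lift_eq_app {t f x : Tm} {k} (h : t.lift k = .app f x) :
    ∃ a b, t = .app a b ∧ f = a.lift k ∧ x = b.lift k := by
  cases t <;> simp [Tm.lift] at h
  case var n => split_ifs at h <;> simp at h
  case app a b => exact ⟨a, b, rfl, h.1.symm, h.2.symm⟩

theorem lift_eq_lam {t u : Tm} {k} (h : t.lift k = .lam u) :
    ∃ a, t = .lam a ∧ u = a.lift (k+1) := by
  cases t <;> simp [Tm.lift] at h
  case var n => split_ifs at h <;> simp at h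
  case lam a => exact ⟨a, rfl, h.symm⟩

theorem lift_eq_pair {t f x : Tm} {k} (h : t.lift k = .pair f x) :
    ∃ a b, t = .pair a b ∧ f = a.lift k ∧ x = b.lift k := by
  cases t <;> simp [Tm.lift] at h
  case var n => split_ifs at h <;> simp at h
  case pair a b => exact ⟨a, b, rfl, h.1.symm, h.2.symm⟩

theorem lift_eq_p1 {t u : Tm} {k} (h : t.lift k = .p1 u) :
    ∃ a, t = .p1 a ∧ u = a.lift k := by
  cases t <;> simp [Tm.lift] at h
  case var n => split_ifs at h <;> simp at h
  case p1 a => exact ⟨a, rfl, h.symm⟩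

theorem lift_eq_p2 {t u : Tm} {k} (h : t.lift k = .p2 u) :
    ∃ a, t = .p2 a ∧ u = a.lift k := by
  cases t <;> simp [Tm.lift] at h
  case var n => split_ifs at h <;> simp at h
  case p2 a => exact ⟨a, rfl, h.symm⟩

/-- Images of lifted terms are lifted: the key "unlift" lemma. -/
theorem PrN.unlift {n S Y} (h : PrN n S Y) : ∀ {t k}, S = t.lift k →
    ∃ Y₀, Y = Y₀.lift k ∧ PrN n t Y₀ := by
  induction h with
  | var n i =>
    intro t k ht
    exact ⟨t, by rw [ht], by obtain ⟨i', rfl⟩ := lift_eq_var ht.symm; exact .var _ _⟩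
  | @app _ f f' x x' _ _ ih1 ih2 =>
    intro t k ht
    obtain ⟨a, b, rfl, ha, hb⟩ := lift_eq_app ht.symm
    obtain ⟨Y1, rfl, h1⟩ := ih1 ha
    obtain ⟨Y2, rfl, h2⟩ := ih2 hb
    exact ⟨.app Y1 Y2, by simp [Tm.lift], .app h1 h2⟩
  | @lam _ u u' _ ih =>
    intro t k ht
    obtain ⟨a, rfl, ha⟩ := lift_eq_lam ht.symm
    obtain ⟨Y1, rfl, h1⟩ := ih ha
    exact ⟨.lam Y1, by simp [Tm.lift], .lam h1⟩
  | @pair _ x x' y y' _ _ ih1 ih2 =>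
    intro t k ht
    obtain ⟨a, b, rfl, ha, hb⟩ := lift_eq_pair ht.symm
    obtain ⟨Y1, rfl, h1⟩ := ih1 ha
    obtain ⟨Y2, rfl, h2⟩ := ih2 hb
    exact ⟨.pair Y1 Y2, by simp [Tm.lift], .pair h1 h2⟩
  | @p1 _ u u' _ ih =>
    intro t k ht
    obtain ⟨a, rfl, ha⟩ := lift_eq_p1 ht.symm
    obtain ⟨Y1, rfl, h1⟩ := ih ha
    exact ⟨.p1 Y1, by simp [Tm.lift], .p1 h1⟩
  | @p2 _ u u' _ ih =>
    intro t k ht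
    obtain ⟨a, rfl, ha⟩ := lift_eq_p2 ht.symm
    obtain ⟨Y1, rfl, h1⟩ := ih ha
    exact ⟨.p2 Y1, by simp [Tm.lift], .p2 h1⟩
  | @eta _ u u' _ ih =>
    intro t k ht
    obtain ⟨Y1, rfl, h1⟩ := ih ht
    refine ⟨.lam (.app (Y1.lift 0) (.var 0)), ?_, .eta h1⟩
    have h1' : (Y1.lift 0).lift (k+1) = (Y1.lift k).lift 0 := lift_lift Y1 (Nat.zero_le k)
    simp [Tm.lift, h1']
  | @sp _ u p q _ _ ih1 ih2 =>
    intro t k ht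
    subst ht
    obtain ⟨Y1, rfl, h1⟩ := ih1 (t := .p1 t) (k := k) (by simp [Tm.lift])
    obtain ⟨Y2, rfl, h2⟩ := ih2 (t := .p2 t) (k := k) (by simp [Tm.lift])
    exact ⟨.pair Y1 Y2, by simp [Tm.lift], .sp h1 h2⟩

/- ### substitution for parallel expansion -/

theorem PrN.substPe {a X Y} (h : PrN a X Y) : ∀ {k s s'}, Pe s s' →
    Pe (X.subst k s) (Y.subst k s') := by
  induction h with
  | var n i =>
    intro k s s' hs
    simp only [Tm.subst]
    split_ifs
    · exact hs
    · exact Pe.refl _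
    · exact Pe.refl _
  | app _ _ ih1 ih2 => intro k s s' hs; exact .app (ih1 hs) (ih2 hs)
  | lam _ ih => intro k s s' hs; exact .lam (ih (hs.lift 0))
  | pair _ _ ih1 ih2 => intro k s s' hs; exact .pair (ih1 hs) (ih2 hs)
  | p1 _ ih => intro k s s' hs; exact .p1 (ih hs)
  | p2 _ ih => intro k s s' hs; exact .p2 (ih hs)
  | @eta _ t t' _ ih =>
    intro k s s' hs
    have hcomm : (t'.lift 0).subst (k+1) (s'.lift 0) = (t'.subst k s').lift 0 :=
      (lift_subst_le t' (Nat.zero_le k)).symm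
    have hv : (Tm.var 0).subst (k+1) (s'.lift 0) = Tm.var 0 := by
      simp [Tm.subst]
    have := (ih (k := k) hs).eta
    simpa [Tm.subst, hcomm, hv] using this
  | @sp _ t p q _ _ ih1 ih2 =>
    intro k s s' hs
    exact .sp (by simpa [Tm.subst] using ih1 hs) (by simpa [Tm.subst] using ih2 hs)

/- ### relating Pe to StepE chains -/

theorem StepE.toPe {a b : Tm} (h : StepE a b) : Pe a b := by
  induction h with
  | eta => exact (Pe.refl _).eta
  | sp => exact Pe.sp (Pe.refl _) (Pe.refl _)
  | lam _ ih => exact ih.lam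
  | appL _ ih => exact ih.app (Pe.refl _)
  | appR _ ih => exact (Pe.refl _).app ih
  | pairL _ ih => exact ih.pair (Pe.refl _)
  | pairR _ ih => exact (Pe.refl _).pair ih
  | p1 _ ih => exact ih.p1
  | p2 _ ih => exact ih.p2

theorem PrN.toES {n a b} (h : PrN n a b) : ES a b := by
  induction h with
  | var n i => exact .refl
  | app _ _ ih1 ih2 => exact (ES.appL ih1).trans (ES.appR ih2)
  | lam _ ih => exact ES.lam ih
  | pair _ _ ih1 ih2 => exact (ES.pairL ih1).trans (ES.pairR ih2)
  | p1 _ ih => exact ES.p1 ih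
  | p2 _ ih => exact ES.p2 ih
  | @eta _ t t' _ ih =>
    exact (Relation.ReflTransGen.single StepE.eta).trans
      (ES.lam (ES.appL (ih.lift 0)))
  | @sp _ t p q _ _ ih1 ih2 =>
    exact (Relation.ReflTransGen.single StepE.sp).trans
      ((ES.pairL ih1).trans (ES.pairR ih2))

theorem Pe.toES {a b} (h : Pe a b) : ES a b := by
  obtain ⟨n, h⟩ := h; exact h.toES

theorem Pe.subst {X Y} (h : Pe X Y) {k s s'} (hs : Pe s s') :
    Pe (X.subst k s) (Y.subst k s') := by
  obtain ⟨a, h⟩ := h; exact h.substPe hs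
/- ### Key lemma for β-redexes:
if `S = Wout W (lam A)` is a lambda under a word of projections, `F` is a
parallel expansion of `S`, and `B'` a parallel expansion of `B`, then
`app (Win V F) B'` R-reduces to a parallel expansion of
`(Win V (Wout W A)).subst 0 B` (the result of distributing the projections
and β-reducing). -/
theorem keyBeta {n S F} (h : PrN n S F) :
    ∀ {V W : List Bool} {A B B' : Tm} {nb : Nat}, PrN nb B B' → S = Wout W (.lam A) →
    ∃ P, RS (.app (Win V F) B') P ∧ Pe ((Win V (Wout W A)).subst 0 B) P := by
  induction h with
  | var n i =>
    intro V W A B B' nb hb hS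
    exfalso
    cases W with
    | nil => simp at hS
    | cons b W' => cases b <;> simp [prj] at hS
  | @app _ f f' x x' _ _ ih1 ih2 =>
    intro V W A B B' nb hb hS
    exfalso
    cases W with
    | nil => simp at hS
    | cons b W' => cases b <;> simp [prj] at hS
  | @pair _ x x' y y' _ _ ih1 ih2 =>
    intro V W A B B' nb hb hS
    exfalso
    cases W with
    | nil => simp at hS
    | cons b W' => cases b <;> simp [prj] at hS
  | @lam _ t t' h1 ih =>
    intro V W A B B' nb hb hS
    cases W with
    | cons b W' => exfalso; cases b <;> simp [prj] at hS
    | nil =>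
      simp only [Wout_nil, Tm.lam.injEq] at hS
      subst hS
      have step1 : RS (.app (Win V (.lam t')) B') (.app (.lam (Win V t')) B') :=
        RS.appL (lam_pull V t')
      have step2 : StepR (.app (.lam (Win V t')) B') ((Win V t').subst 0 B') := .beta
      refine ⟨(Win V t').subst 0 B', step1.tail step2, ?_⟩
      rw [Win_subst, Win_subst]
      exact Pe.win V ((Pe.ofN h1).subst (Pe.ofN hb))
  | @p1 _ t t' h1 ih =>
    intro V W A B B' nb hb hS
    cases W with
    | nil => exfalso; simp at hS
    | cons b W' =>
      cases b
      · simp only [Wout_cons, prj_false, Tm.p1.injEq] at hS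
        exact ih (V := false :: V) (W := W') hb hS
      · exfalso; simp [prj] at hS
  | @p2 _ t t' h1 ih =>
    intro V W A B B' nb hb hS
    cases W with
    | nil => exfalso; simp at hS
    | cons b W' =>
      cases b
      · exfalso; simp [prj] at hS
      · simp only [Wout_cons, prj_true, Tm.p2.injEq] at hS
        exact ih (V := true :: V) (W := W') hb hS
  | @eta _ t F₀ h0 ih =>
    intro V W A B B' nb hb hS
    obtain ⟨Q, hQ1, hQ2⟩ := ih (V := []) (W := W) (A := A) hb hS
    simp only [Win_nil] at hQ1 hQ2
    refine ⟨Win V Q, ?_, ?_⟩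
    · have step1 : RS (.app (Win V (.lam (.app (F₀.lift 0) (.var 0)))) B')
          (.app (.lam (Win V (.app (F₀.lift 0) (.var 0)))) B') :=
        RS.appL (lam_pull V _)
      have step2 : StepR (.app (.lam (Win V (.app (F₀.lift 0) (.var 0)))) B')
          ((Win V (.app (F₀.lift 0) (.var 0))).subst 0 B') := StepR.beta
      have keyeq : (Win V (.app (F₀.lift 0) (.var 0))).subst 0 B' = Win V (.app F₀ B') := by
        rw [Win_subst]
        congr 1
        simp only [Tm.subst, subst_lift_cancel]
        rfl
      have step3 : RS (Win V (.app F₀ B')) (Win V Q) := RS.win V hQ1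
      exact ((step1.tail step2).trans (by rw [keyeq])).trans step3
    · rw [Win_subst]
      exact Pe.win V hQ2
  | @sp _ t p q h1 h2 ih1 ih2 =>
    intro V W A B B' nb hb hS
    cases V with
    | nil =>
      obtain ⟨Q₁, hQ11, hQ12⟩ := ih1 (V := []) (W := false :: W) (A := A) hb
        (by simp [prj, hS])
      obtain ⟨Q₂, hQ21, hQ22⟩ := ih2 (V := []) (W := true :: W) (A := A) hb
        (by simp [prj, hS])
      simp only [Win_nil] at hQ11 hQ12 hQ21 hQ22
      refine ⟨.pair Q₁ Q₂, ?_, ?_⟩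
      · have step1 : StepR (.app (Tm.pair p q) B') (.pair (.app p B') (.app q B')) :=
          StepR.dpi
        exact ((Relation.ReflTransGen.single step1).trans (RS.pairL hQ11)).trans
          (RS.pairR hQ21)
      · simp only [Win_nil]
        refine Pe.sp ?_ ?_
        · simpa [prj, Tm.subst] using hQ12
        · simpa [prj, Tm.subst] using hQ22
    | cons b V' =>
      have step1 : RS (.app (Win (b :: V') (Tm.pair p q)) B')
          (.app (Win V' (sel b p q)) B') := by
        simp only [Win_cons]
        exact RS.appL (RS.win V' (Relation.ReflTransGen.single (StepR.prj_pair b p q)))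
      cases b
      · obtain ⟨Q, hQ1, hQ2⟩ := ih1 (V := V') (W := false :: W) (A := A) hb
          (by simp [prj, hS])
        exact ⟨Q, step1.trans (by simpa using hQ1), by simpa [prj] using hQ2⟩
      · obtain ⟨Q, hQ1, hQ2⟩ := ih2 (V := V') (W := true :: W) (A := A) hb
          (by simp [prj, hS])
        exact ⟨Q, step1.trans (by simpa using hQ1), by simpa [prj] using hQ2⟩
theorem Pe.unlift {t Y : Tm} {k} (h : Pe (t.lift k) Y) :
    ∃ Y₀, Y = Y₀.lift k ∧ Pe t Y₀ := by
  obtain ⟨m, h⟩ := h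
  obtain ⟨Y₀, rfl, h₀⟩ := h.unlift rfl
  exact ⟨Y₀, rfl, ⟨m, h₀⟩⟩

/- ### Key lemmas for pairs: mutual, by strong induction on the size index.
Φ₁ : an expansion of a pair, applied to an argument, reduces to a distributed pair.
Φ₂ : an expansion of a (word-of-projections of a) projection of a pair reduces to
     an expansion of the corresponding selection. -/
theorem phiPair : ∀ n : Nat,
    (∀ {S F : Tm}, PrN n S F → ∀ {C D B B' : Tm} {nb : Nat}, S = .pair C D →
      PrN nb B B' →
      ∃ P₁ P₂, RS (.app F B') (.pair (.app P₁ B') (.app P₂ B')) ∧ Pe C P₁ ∧ Pe D P₂) ∧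
    (∀ {S F : Tm}, PrN n S F → ∀ {U : List Bool} {j : Bool} {C D : Tm},
      S = Wout U (prj j (.pair C D)) →
      ∃ P, RS F P ∧ Pe (Wout U (sel j C D)) P) := by
  intro n
  induction n using Nat.strong_induction_on with
  | _ n IH =>
  constructor
  · -- Φ₁
    intro S F h C D B B' nb hS hb
    subst hS
    cases h with
    | pair hC hD =>
      exact ⟨_, _, Relation.ReflTransGen.single StepR.dpi, Pe.ofN hC, Pe.ofN hD⟩
    | @eta n₀ _ F₀ h0 =>
      obtain ⟨P₁, P₂, hr, hc, hd⟩ := (IH n₀ (by omega)).1 h0 rfl hb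
      have step1 : StepR (.app (.lam (.app (F₀.lift 0) (.var 0))) B')
          ((Tm.app (F₀.lift 0) (.var 0)).subst 0 B') := StepR.beta
      have keyeq : (Tm.app (F₀.lift 0) (.var 0)).subst 0 B' = .app F₀ B' := by
        simp only [Tm.subst, subst_lift_cancel]
        rfl
      exact ⟨P₁, P₂, (Relation.ReflTransGen.single (keyeq ▸ step1)).trans hr, hc, hd⟩
    | @sp n₀ _ p q h1 h2 =>
      obtain ⟨p', hp1, hp2⟩ := (IH n₀ (by omega)).2 h1 (U := []) (j := false)
        (C := C) (D := D) rfl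
      obtain ⟨q', hq1, hq2⟩ := (IH n₀ (by omega)).2 h2 (U := []) (j := true)
        (C := C) (D := D) rfl
      simp only [Wout_nil, sel_false, sel_true] at hp2 hq2
      refine ⟨p', q', ?_, hp2, hq2⟩
      exact ((Relation.ReflTransGen.single StepR.dpi).trans
        (RS.pairL (RS.appL hp1))).trans (RS.pairR (RS.appL hq1))
  · -- Φ₂
    intro S F h U j C D hS
    cases h with
    | var n i =>
      exfalso
      obtain ⟨b, Y, hY⟩ := show ∃ b Y, Wout U (prj j (Tm.pair C D)) = prj b Y by
        cases U with
        | nil => exact ⟨j, _, rfl⟩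
        | cons b W => exact ⟨b, _, rfl⟩
      rw [hY] at hS
      cases b <;> simp [prj] at hS
    | app h1 h2 =>
      exfalso
      obtain ⟨b, Y, hY⟩ := show ∃ b Y, Wout U (prj j (Tm.pair C D)) = prj b Y by
        cases U with
        | nil => exact ⟨j, _, rfl⟩
        | cons b W => exact ⟨b, _, rfl⟩
      rw [hY] at hS
      cases b <;> simp [prj] at hS
    | lam h1 =>
      exfalso
      obtain ⟨b, Y, hY⟩ := show ∃ b Y, Wout U (prj j (Tm.pair C D)) = prj b Y by
        cases U with
        | nil => exact ⟨j, _, rfl⟩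
        | cons b W => exact ⟨b, _, rfl⟩
      rw [hY] at hS
      cases b <;> simp [prj] at hS
    | pair h1 h2 =>
      exfalso
      obtain ⟨b, Y, hY⟩ := show ∃ b Y, Wout U (prj j (Tm.pair C D)) = prj b Y by
        cases U with
        | nil => exact ⟨j, _, rfl⟩
        | cons b W => exact ⟨b, _, rfl⟩
      rw [hY] at hS
      cases b <;> simp [prj] at hS
    | @p1 n₀ t F₁ h1 =>
      cases U with
      | cons b U' =>
        cases b
        · simp only [Wout_cons, prj_false, Tm.p1.injEq] at hS
          obtain ⟨P, hr, hp⟩ := (IH n₀ (by omega)).2 h1 (U := U') (j := j)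
            (C := C) (D := D) hS
          exact ⟨.p1 P, RS.p1 hr, hp.p1⟩
        · exfalso; simp [prj] at hS
      | nil =>
        cases j with
        | true => exfalso; simp [prj] at hS
        | false =>
          simp only [Wout_nil, prj_false, Tm.p1.injEq] at hS
          subst hS
          -- h1 : PrN n₀ (pair C D) F₁, term is p1 F₁, target is C
          cases h1 with
          | pair hC hD =>
            exact ⟨_, Relation.ReflTransGen.single StepR.pi1, Pe.ofN hC⟩
          | @eta n₁ _ F₀ h00 =>
            -- F₁ = lam (app (F₀.lift 0) (var 0))
            have h00l : PrN n₁ (Tm.pair (C.lift 0) (D.lift 0)) (F₀.lift 0) := by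
              simpa [Tm.lift] using h00.lift 0
            obtain ⟨P₁, P₂, hr, hc, hd⟩ := (IH n₁ (by omega)).1 h00l rfl
              (PrN.var 0 0)
            obtain ⟨P₁₀, rfl, hc0⟩ := Pe.unlift hc
            refine ⟨.lam (.app (P₁₀.lift 0) (.var 0)), ?_, hc0.eta⟩
            have s1 : StepR (.p1 (.lam (.app (F₀.lift 0) (.var 0))))
                (.lam (.p1 (.app (F₀.lift 0) (.var 0)))) := StepR.pi1lam
            have s2 : RS (.lam (.p1 (.app (F₀.lift 0) (.var 0))))
                (.lam (.p1 (.pair (.app (P₁₀.lift 0) (.var 0)) (.app P₂ (.var 0))))) :=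
              RS.lam (RS.p1 hr)
            have s3 : StepR
                (Tm.lam (.p1 (.pair (.app (P₁₀.lift 0) (.var 0)) (.app P₂ (.var 0)))))
                (.lam (.app (P₁₀.lift 0) (.var 0))) := StepR.lam StepR.pi1
            exact (((Relation.ReflTransGen.single s1).trans s2).tail s3)
          | @sp n₁ _ R₁ R₂ hq1 hq2 =>
            obtain ⟨P, hr, hp⟩ := (IH n₁ (by omega)).2 hq1 (U := []) (j := false)
              (C := C) (D := D) rfl
            exact ⟨P, (Relation.ReflTransGen.single StepR.pi1).trans hr, by simpa using hp⟩
    | @p2 n₀ t F₁ h1 =>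
      cases U with
      | cons b U' =>
        cases b
        · exfalso; simp [prj] at hS
        · simp only [Wout_cons, prj_true, Tm.p2.injEq] at hS
          obtain ⟨P, hr, hp⟩ := (IH n₀ (by omega)).2 h1 (U := U') (j := j)
            (C := C) (D := D) hS
          exact ⟨.p2 P, RS.p2 hr, hp.p2⟩
      | nil =>
        cases j with
        | false => exfalso; simp [prj] at hS
        | true =>
          simp only [Wout_nil, prj_true, Tm.p2.injEq] at hS
          subst hS
          cases h1 with
          | pair hC hD =>
            exact ⟨_, Relation.ReflTransGen.single StepR.pi2, Pe.ofN hD⟩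
          | @eta n₁ _ F₀ h00 =>
            have h00l : PrN n₁ (Tm.pair (C.lift 0) (D.lift 0)) (F₀.lift 0) := by
              simpa [Tm.lift] using h00.lift 0
            obtain ⟨P₁, P₂, hr, hc, hd⟩ := (IH n₁ (by omega)).1 h00l rfl
              (PrN.var 0 0)
            obtain ⟨P₂₀, rfl, hd0⟩ := Pe.unlift hd
            refine ⟨.lam (.app (P₂₀.lift 0) (.var 0)), ?_, hd0.eta⟩
            have s1 : StepR (.p2 (.lam (.app (F₀.lift 0) (.var 0))))
                (.lam (.p2 (.app (F₀.lift 0) (.var 0)))) := StepR.pi2lam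
            have s2 : RS (.lam (.p2 (.app (F₀.lift 0) (.var 0))))
                (.lam (.p2 (.pair (.app P₁ (.var 0)) (.app (P₂₀.lift 0) (.var 0))))) :=
              RS.lam (RS.p2 hr)
            have s3 : StepR
                (Tm.lam (.p2 (.pair (.app P₁ (.var 0)) (.app (P₂₀.lift 0) (.var 0)))))
                (.lam (.app (P₂₀.lift 0) (.var 0))) := StepR.lam StepR.pi2
            exact (((Relation.ReflTransGen.single s1).trans s2).tail s3)
          | @sp n₁ _ R₁ R₂ hq1 hq2 =>
            obtain ⟨P, hr, hp⟩ := (IH n₁ (by omega)).2 hq2 (U := []) (j := true)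
              (C := C) (D := D) rfl
            exact ⟨P, (Relation.ReflTransGen.single StepR.pi2).trans hr, by simpa using hp⟩
    | @eta n₀ _ F₀ h0 =>
      obtain ⟨P₀, hr, hp⟩ := (IH n₀ (by omega)).2 h0 (U := U) (j := j)
        (C := C) (D := D) hS
      exact ⟨.lam (.app (P₀.lift 0) (.var 0)), RS.lam (RS.appL (hr.lift 0)), hp.eta⟩
    | @sp n₀ _ K₁ K₂ h1 h2 =>
      obtain ⟨K₁', hr1, hp1⟩ := (IH n₀ (by omega)).2 h1 (U := false :: U) (j := j)
        (C := C) (D := D) (by simp [prj, hS])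
      obtain ⟨K₂', hr2, hp2⟩ := (IH n₀ (by omega)).2 h2 (U := true :: U) (j := j)
        (C := C) (D := D) (by simp [prj, hS])
      simp only [Wout_cons, prj_false, prj_true] at hp1 hp2
      exact ⟨.pair K₁' K₂', (RS.pairL hr1).trans (RS.pairR hr2), Pe.sp hp1 hp2⟩
/- ### Key lemma for projections of lambdas:
an expansion of `Wout U (prj j (lam A))` R-reduces to an expansion of
`Wout U (lam (prj j A))`. -/
theorem keyPiLam : ∀ n : Nat, ∀ {S F : Tm}, PrN n S F →
    ∀ {U : List Bool} {j : Bool} {A : Tm}, S = Wout U (prj j (.lam A)) →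
    ∃ P, RS F P ∧ Pe (Wout U (.lam (prj j A))) P := by
  intro n
  induction n using Nat.strong_induction_on with
  | _ n IH =>
  intro S F h U j A hS
  cases h with
  | var n i =>
    exfalso
    obtain ⟨b, Y, hY⟩ := show ∃ b Y, Wout U (prj j (Tm.lam A)) = prj b Y by
      cases U with
      | nil => exact ⟨j, _, rfl⟩
      | cons b W => exact ⟨b, _, rfl⟩
    rw [hY] at hS
    cases b <;> simp [prj] at hS
  | app h1 h2 =>
    exfalso
    obtain ⟨b, Y, hY⟩ := show ∃ b Y, Wout U (prj j (Tm.lam A)) = prj b Y by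
      cases U with
      | nil => exact ⟨j, _, rfl⟩
      | cons b W => exact ⟨b, _, rfl⟩
    rw [hY] at hS
    cases b <;> simp [prj] at hS
  | lam h1 =>
    exfalso
    obtain ⟨b, Y, hY⟩ := show ∃ b Y, Wout U (prj j (Tm.lam A)) = prj b Y by
      cases U with
      | nil => exact ⟨j, _, rfl⟩
      | cons b W => exact ⟨b, _, rfl⟩
    rw [hY] at hS
    cases b <;> simp [prj] at hS
  | pair h1 h2 =>
    exfalso
    obtain ⟨b, Y, hY⟩ := show ∃ b Y, Wout U (prj j (Tm.lam A)) = prj b Y by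
      cases U with
      | nil => exact ⟨j, _, rfl⟩
      | cons b W => exact ⟨b, _, rfl⟩
    rw [hY] at hS
    cases b <;> simp [prj] at hS
  | @p1 n₀ t F₁ h1 =>
    cases U with
    | cons b U' =>
      cases b
      · simp only [Wout_cons, prj_false, Tm.p1.injEq] at hS
        obtain ⟨P, hr, hp⟩ := IH n₀ (by omega) h1 (U := U') (j := j) (A := A) hS
        exact ⟨.p1 P, RS.p1 hr, hp.p1⟩
      · exfalso; simp [prj] at hS
    | nil =>
      cases j with
      | true => exfalso; simp [prj] at hS
      | false =>
        simp only [Wout_nil, prj_false, Tm.p1.injEq] at hS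
        subst hS
        -- h1 : PrN n₀ (lam A) F₁, term p1 F₁, target lam (p1 A)
        cases h1 with
        | lam hA =>
          exact ⟨_, Relation.ReflTransGen.single StepR.pi1lam,
            ((Pe.ofN hA).p1).lam⟩
        | @eta n₁ _ F₀ h00 =>
          have h00l : PrN n₁ (Tm.lam (A.lift 1)) (F₀.lift 0) := by
            simpa [Tm.lift] using h00.lift 0
          obtain ⟨Q, hr, hp⟩ := keyBeta h00l (V := []) (W := []) (A := A.lift 1)
            (B := .var 0) (B' := .var 0) (PrN.var 0 0) rfl
          simp only [Win_nil, Wout_nil, lift_succ_subst_var] at hr hp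
          refine ⟨.lam (.p1 Q), ?_, (hp.p1).lam⟩
          exact (Relation.ReflTransGen.single StepR.pi1lam).trans (RS.lam (RS.p1 hr))
        | @sp n₁ _ R₁ R₂ hq1 hq2 =>
          obtain ⟨P, hr, hp⟩ := IH n₁ (by omega) hq1 (U := []) (j := false) (A := A) rfl
          exact ⟨P, (Relation.ReflTransGen.single StepR.pi1).trans hr, by simpa using hp⟩
  | @p2 n₀ t F₁ h1 =>
    cases U with
    | cons b U' =>
      cases b
      · exfalso; simp [prj] at hS
      · simp only [Wout_cons, prj_true, Tm.p2.injEq] at hS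
        obtain ⟨P, hr, hp⟩ := IH n₀ (by omega) h1 (U := U') (j := j) (A := A) hS
        exact ⟨.p2 P, RS.p2 hr, hp.p2⟩
    | nil =>
      cases j with
      | false => exfalso; simp [prj] at hS
      | true =>
        simp only [Wout_nil, prj_true, Tm.p2.injEq] at hS
        subst hS
        cases h1 with
        | lam hA =>
          exact ⟨_, Relation.ReflTransGen.single StepR.pi2lam,
            ((Pe.ofN hA).p2).lam⟩
        | @eta n₁ _ F₀ h00 =>
          have h00l : PrN n₁ (Tm.lam (A.lift 1)) (F₀.lift 0) := by
            simpa [Tm.lift] using h00.lift 0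
          obtain ⟨Q, hr, hp⟩ := keyBeta h00l (V := []) (W := []) (A := A.lift 1)
            (B := .var 0) (B' := .var 0) (PrN.var 0 0) rfl
          simp only [Win_nil, Wout_nil, lift_succ_subst_var] at hr hp
          refine ⟨.lam (.p2 Q), ?_, (hp.p2).lam⟩
          exact (Relation.ReflTransGen.single StepR.pi2lam).trans (RS.lam (RS.p2 hr))
        | @sp n₁ _ R₁ R₂ hq1 hq2 =>
          obtain ⟨P, hr, hp⟩ := IH n₁ (by omega) hq2 (U := []) (j := true) (A := A) rfl
          exact ⟨P, (Relation.ReflTransGen.single StepR.pi2).trans hr, by simpa using hp⟩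
  | @eta n₀ _ F₀ h0 =>
    obtain ⟨P₀, hr, hp⟩ := IH n₀ (by omega) h0 (U := U) (j := j) (A := A) hS
    exact ⟨.lam (.app (P₀.lift 0) (.var 0)), RS.lam (RS.appL (hr.lift 0)), hp.eta⟩
  | @sp n₀ _ K₁ K₂ h1 h2 =>
    obtain ⟨K₁', hr1, hp1⟩ := IH n₀ (by omega) h1 (U := false :: U) (j := j) (A := A)
      (by simp [prj, hS])
    obtain ⟨K₂', hr2, hp2⟩ := IH n₀ (by omega) h2 (U := true :: U) (j := j) (A := A)
      (by simp [prj, hS])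
    simp only [Wout_cons, prj_false, prj_true] at hp1 hp2
    exact ⟨.pair K₁' K₂', (RS.pairL hr1).trans (RS.pairR hr2), Pe.sp hp1 hp2⟩
/- ### Main lemma: one parallel expansion versus one R-step. -/
theorem parExp_stepR {n : Nat} {M N : Tm} (h : PrN n M N) :
    ∀ {M' : Tm}, StepR M M' → ∃ P, RS N P ∧ Pe M' P := by
  induction h with
  | var n i => intro M' hstep; cases hstep
  | @app n₀ f f' x x' hf ha ihf iha =>
    intro M' hstep
    cases hstep with
    | @beta A B =>
      obtain ⟨P, hr, hp⟩ := keyBeta hf (V := []) (W := []) (A := A) (B := x)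
        (B' := x') ha rfl
      simp only [Win_nil, Wout_nil] at hr hp
      exact ⟨P, hr, hp⟩
    | @dpi C D _ =>
      obtain ⟨P₁, P₂, hr, hc, hd⟩ := (phiPair n₀).1 hf rfl ha
      exact ⟨.pair (.app P₁ x') (.app P₂ x'), hr,
        Pe.pair (hc.app (Pe.ofN ha)) (hd.app (Pe.ofN ha))⟩
    | appL s =>
      obtain ⟨Q, hr, hp⟩ := ihf s
      exact ⟨.app Q x', RS.appL hr, hp.app (Pe.ofN ha)⟩
    | appR s =>
      obtain ⟨Q, hr, hp⟩ := iha s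
      exact ⟨.app f' Q, RS.appR hr, (Pe.ofN hf).app hp⟩
  | @lam n₀ t t' h1 ih =>
    intro M' hstep
    cases hstep with
    | lam s =>
      obtain ⟨Q, hr, hp⟩ := ih s
      exact ⟨.lam Q, RS.lam hr, hp.lam⟩
  | @pair n₀ x x' y y' h1 h2 ih1 ih2 =>
    intro M' hstep
    cases hstep with
    | pairL s =>
      obtain ⟨Q, hr, hp⟩ := ih1 s
      exact ⟨.pair Q y', RS.pairL hr, hp.pair (Pe.ofN h2)⟩
    | pairR s =>
      obtain ⟨Q, hr, hp⟩ := ih2 s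
      exact ⟨.pair x' Q, RS.pairR hr, (Pe.ofN h1).pair hp⟩
  | @p1 n₀ t F₁ h1 ih =>
    intro M' hstep
    cases hstep with
    | pi1 =>
      obtain ⟨P, hr, hp⟩ := (phiPair (n₀+1)).2 (PrN.p1 h1) (U := []) (j := false) rfl
      exact ⟨P, hr, by simpa using hp⟩
    | pi1lam =>
      obtain ⟨P, hr, hp⟩ := keyPiLam (n₀+1) (PrN.p1 h1) (U := []) (j := false) rfl
      exact ⟨P, hr, by simpa using hp⟩
    | p1 s =>
      obtain ⟨Q, hr, hp⟩ := ih s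
      exact ⟨.p1 Q, RS.p1 hr, hp.p1⟩
  | @p2 n₀ t F₁ h1 ih =>
    intro M' hstep
    cases hstep with
    | pi2 =>
      obtain ⟨P, hr, hp⟩ := (phiPair (n₀+1)).2 (PrN.p2 h1) (U := []) (j := true) rfl
      exact ⟨P, hr, by simpa using hp⟩
    | pi2lam =>
      obtain ⟨P, hr, hp⟩ := keyPiLam (n₀+1) (PrN.p2 h1) (U := []) (j := true) rfl
      exact ⟨P, hr, by simpa using hp⟩
    | p2 s =>
      obtain ⟨Q, hr, hp⟩ := ih s
      exact ⟨.p2 Q, RS.p2 hr, hp.p2⟩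
  | @eta n₀ t N₀ h0 ih =>
    intro M' hstep
    obtain ⟨Q, hr, hp⟩ := ih hstep
    exact ⟨.lam (.app (Q.lift 0) (.var 0)), RS.lam (RS.appL (hr.lift 0)), hp.eta⟩
  | @sp n₀ t p q h1 h2 ih1 ih2 =>
    intro M' hstep
    obtain ⟨Q₁, hr1, hp1⟩ := ih1 (StepR.p1 hstep)
    obtain ⟨Q₂, hr2, hp2⟩ := ih2 (StepR.p2 hstep)
    exact ⟨.pair Q₁ Q₂, (RS.pairL hr1).trans (RS.pairR hr2), Pe.sp hp1 hp2⟩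

/-- one parallel expansion versus many R-steps -/
theorem pe_RS {M N : Tm} (h : Pe M N) : ∀ {M' : Tm}, RS M M' →
    ∃ P, RS N P ∧ Pe M' P := by
  intro M' hr
  induction hr with
  | refl => exact ⟨N, .refl, h⟩
  | @tail b c _ s ih =>
    obtain ⟨Pb, hrb, hpb⟩ := ih
    obtain ⟨m, hpb'⟩ := hpb
    obtain ⟨P, hr2, hp2⟩ := parExp_stepR hpb' s
    exact ⟨P, hrb.trans hr2, hp2⟩

/-- The relations →_E and →_R commute. -/
theorem stepE_stepR_commute (M M' N : Tm)
    (hE : Relation.ReflTransGen StepE M N) (hR : Relation.ReflTransGen StepR M M') :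
    ∃ P, Relation.ReflTransGen StepR N P ∧ Relation.ReflTransGen StepE M' P := by
  induction hE using Relation.ReflTransGen.head_induction_on generalizing M' with
  | refl => exact ⟨M', hR, .refl⟩
  | @head a b hab _ ih =>
    -- a →E b, b →E* N ; a →R* M'
    obtain ⟨Q, hrQ, hpQ⟩ := pe_RS hab.toPe hR
    obtain ⟨P, hrP, heP⟩ := ih Q hrQ
    exact ⟨P, hrP, (hpQ.toES).trans heP⟩
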